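/- Let n ≥ 5, let A be the n×n clamped-free beam matrix, let K > 0 and h > 0, and suppose u ∈ ℝⁿ satisfies the nonlinear finite-difference system (A u)_i = h⁴ K e^{−u_i} for every i = 1, …, n. Then u is positive and strictly increasing: 0 < u₁ and u_i < u_{i+1} for all i = 1, …, n−1. -/

import Mathlib

open scoped ENNReal

/-- The `n × n` clamped-free beam matrix (1-based index `i' = i+1`). -/
def A_CF (n : ℕ) : Matrix (Fin n) (Fin n) ℝ :=
  Matrix.of fun i j =>
    let i' := (i : ℕ) + 1
    let j' := (j : ℕ) + 1
    if i' = j' then (if i' = 1 then 7 else if i' = n - 1 then 5 else if i' = n then 2 else 6)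
    else if j' = i' + 1 then (if i' = n - 1 then -2 else -4)
    else if i' = j' + 1 then -4
    else if j' = i' + 2 then 1
    else if i' = j' + 2 then (if i' = n then 2 else 1)
    else 0

/-!
Write `S` for the second difference of a clamped end, with ghost values `u₋₁ = 0`, `u₋₂ = u₀`.
The beam matrix factors through the discrete bending moment `W = S u`: row `i` of `A u` is `S`
applied to `W` read backwards from the free end, where the ghost values are `Wₙ = 0` and
`Wₙ₊₁ = Wₙ₋₁`. A sequence whose clamped second difference is positive is itself positive and
strictly increasing, since its increments are partial sums of positive terms. Applied to the
reversed moment, whose clamped second difference is `h⁴ K e^{-u} > 0`, this makes `W` positive;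
applied to `u` it gives the theorem.
-/

open Finset Matrix

theorem Matrix.mulVec_apply_eq_sum_window {ι R : Type*} [NonUnitalNonAssocSemiring R] {n : ℕ}
    (A : Matrix ι (Fin n) R) (u : Fin n → R) (i : ι) {a w : ℕ} (haw : a + w ≤ n)
    (hA : ∀ j : Fin n, (j : ℕ) < a ∨ a + w ≤ j → A i j = 0) :
    (A *ᵥ u) i = ∑ k : Fin w, A i ⟨a + k, by omega⟩ * u ⟨a + k, by omega⟩ := by
  let e : Fin w ↪ Fin n := (Fin.natAddEmb a).trans (Fin.castLEEmb haw)
  rw [mulVec, dotProduct, ← sum_subset (subset_univ (univ.map e)), sum_map]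
  · rfl
  · intro j _ hj
    rw [hA j ?_, zero_mul]
    by_contra! h
    exact hj (mem_map.2 ⟨⟨j - a, by omega⟩, mem_univ _, Fin.ext (by simp [e]; omega)⟩)

noncomputable def extendByZero {α : Type*} [Zero α] {n : ℕ} (u : Fin n → α) (k : ℕ) : α :=
  if h : k < n then u ⟨k, h⟩ else 0

lemma extendByZero_coe {α : Type*} [Zero α] {n : ℕ} (u : Fin n → α) (j : Fin n) :
    extendByZero u j = u j :=
  dif_pos j.isLt

section Stencils

variable {n : ℕ} (u : Fin n → ℝ)

local notation "x" => extendByZero u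

lemma A_CF_apply_eq_zero {i j : Fin n} (h : (j : ℕ) + 2 < i ∨ (i : ℕ) + 2 < j) :
    A_CF n i j = 0 := by
  simp only [A_CF, of_apply]
  split_ifs <;> first | rfl | (exfalso; omega)

lemma A_CF_mulVec_apply_zero (hn : 3 ≤ n) :
    (A_CF n *ᵥ u) ⟨0, by omega⟩ = 7 * x 0 - 4 * x 1 + x 2 := by
  rw [mulVec_apply_eq_sum_window _ u _ (show 0 + 3 ≤ n by omega)
    fun k hk => A_CF_apply_eq_zero (by dsimp only; omega)]
  simp only [Fin.sum_univ_three, A_CF, of_apply, ← extendByZero_coe u]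
  simp (disch := omega) only [if_pos, if_neg, Fin.coe_ofNat_eq_mod, Nat.reduceMod]
  norm_num
  ring

lemma A_CF_mulVec_apply_one (hn : 4 ≤ n) :
    (A_CF n *ᵥ u) ⟨1, by omega⟩ = -4 * x 0 + 6 * x 1 - 4 * x 2 + x 3 := by
  rw [mulVec_apply_eq_sum_window _ u _ (show 0 + 4 ≤ n by omega)
    fun k hk => A_CF_apply_eq_zero (by dsimp only; omega)]
  simp only [Fin.sum_univ_four, A_CF, of_apply, ← extendByZero_coe u]
  simp (disch := omega) only [if_pos, if_neg, Fin.coe_ofNat_eq_mod, Nat.reduceMod]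
  norm_num
  ring

lemma A_CF_mulVec_apply_add_two (j : ℕ) (hj : j + 5 ≤ n) :
    (A_CF n *ᵥ u) ⟨j + 2, by omega⟩ =
      x j - 4 * x (j + 1) + 6 * x (j + 2) - 4 * x (j + 3) + x (j + 4) := by
  rw [mulVec_apply_eq_sum_window _ u _ hj fun k hk => A_CF_apply_eq_zero (by dsimp only; omega)]
  simp only [Fin.sum_univ_five, A_CF, of_apply, ← extendByZero_coe u]
  simp (disch := omega) only [if_pos, if_neg, Fin.coe_ofNat_eq_mod, Nat.reduceMod]
  norm_num
  ring

lemma A_CF_mulVec_apply_sub_two (hn : 4 ≤ n) :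
    (A_CF n *ᵥ u) ⟨n - 2, by omega⟩ =
      x (n - 4) - 4 * x (n - 3) + 5 * x (n - 2) - 2 * x (n - 1) := by
  rw [mulVec_apply_eq_sum_window _ u _ (show n - 4 + 4 ≤ n by omega)
    fun k hk => A_CF_apply_eq_zero (by dsimp only; omega)]
  simp only [Fin.sum_univ_four, A_CF, of_apply, ← extendByZero_coe u]
  simp (disch := omega) only [if_pos, if_neg, Fin.coe_ofNat_eq_mod, Nat.reduceMod,
    show n - 4 + 1 = n - 3 by omega, show n - 4 + 2 = n - 2 by omega,
    show n - 4 + 3 = n - 1 by omega]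
  norm_num
  ring

lemma A_CF_mulVec_apply_sub_one (hn : 3 ≤ n) :
    (A_CF n *ᵥ u) ⟨n - 1, by omega⟩ = 2 * x (n - 3) - 4 * x (n - 2) + 2 * x (n - 1) := by
  rw [mulVec_apply_eq_sum_window _ u _ (show n - 3 + 3 ≤ n by omega)
    fun k hk => A_CF_apply_eq_zero (by dsimp only; omega)]
  simp only [Fin.sum_univ_three, A_CF, of_apply, ← extendByZero_coe u]
  simp (disch := omega) only [if_pos, if_neg, Fin.coe_ofNat_eq_mod, Nat.reduceMod,
    show n - 3 + 1 = n - 2 by omega, show n - 3 + 2 = n - 1 by omega]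
  norm_num
  ring

end Stencils

/-- `x k - 2 x (k - 1) + x (k - 2)` with the ghost values `x (-1) = 0` and `x (-2) = x 0`. -/
def clampedSecondDiff {R : Type*} [Ring R] (x : ℕ → R) : ℕ → R
  | 0 => 2 * x 0
  | 1 => x 1 - 2 * x 0
  | k + 2 => x (k + 2) - 2 * x (k + 1) + x k

theorem pos_and_strictMonoOn_of_clampedSecondDiff_pos {R : Type*} [CommRing R] [LinearOrder R]
    [IsStrictOrderedRing R] {x : ℕ → R} {m : ℕ} (h : ∀ k ≤ m, 0 < clampedSecondDiff x k) :
    (∀ k ≤ m, 0 < x k) ∧ StrictMonoOn x (Set.Iic m) := by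
  have hx0 : 0 < x 0 := by
    have := h 0 (Nat.zero_le m)
    simp only [clampedSecondDiff] at this
    linarith
  have hstep : ∀ k < m, x k < x (k + 1) := by
    intro k
    induction k with
    | zero =>
      intro hm
      have := h 1 hm
      simp only [clampedSecondDiff] at this
      linarith
    | succ k ih =>
      intro hk
      have := h (k + 2) hk
      simp only [clampedSecondDiff] at this
      linarith [ih (by omega)]
  have hmono : StrictMonoOn x (Set.Iic m) :=
    strictMonoOn_Iic_of_lt_succ fun k hk => by simpa using hstep k hk
  refine ⟨fun k hk => hx0.trans_le ?_, hmono⟩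
  exact hmono.monotoneOn (Set.mem_Iic.mpr (Nat.zero_le m)) (Set.mem_Iic.mpr hk) (Nat.zero_le k)

theorem A_CF_mulVec_apply_eq_clampedSecondDiff {n : ℕ} (hn : 4 ≤ n) (u : Fin n → ℝ)
    (i : Fin n) : (A_CF n *ᵥ u) i =
      clampedSecondDiff (fun k => clampedSecondDiff (extendByZero u) (n - 1 - k)) (n - 1 - i) := by
  obtain ⟨m, rfl⟩ : ∃ m, n = m + 4 := ⟨n - 4, by omega⟩
  obtain ⟨i, hi⟩ := i
  obtain _ | _ | j := i
  · rw [A_CF_mulVec_apply_zero u (by omega)]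
    simp only [clampedSecondDiff, Nat.add_one_sub_one, tsub_zero, tsub_self, Nat.reduceSubDiff,
      add_tsub_cancel_left, zero_add]
    ring
  · rw [A_CF_mulVec_apply_one u hn]
    simp only [clampedSecondDiff, Nat.add_one_sub_one, zero_add, Nat.reduceSubDiff,
      add_tsub_cancel_left, Nat.reduceAdd]
    ring
  · obtain hj | rfl | rfl : j + 5 ≤ m + 4 ∨ m = j ∨ m + 1 = j := by omega
    · rw [A_CF_mulVec_apply_add_two u j hj]
      obtain ⟨l, rfl⟩ : ∃ l, m = j + l + 1 := ⟨m - j - 1, by omega⟩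
      simp only [show j + l + 1 + 4 - 1 - (j + 1 + 1) = l + 2 by omega, clampedSecondDiff,
        show j + l + 1 + 4 - 1 - (l + 2) = j + 2 by omega,
        show j + l + 1 + 4 - 1 - (l + 1) = j + 3 by omega,
        show j + l + 1 + 4 - 1 - l = j + 4 by omega]
      ring
    · show (A_CF (m + 4) *ᵥ u) ⟨m + 4 - 2, by omega⟩ = _
      rw [A_CF_mulVec_apply_sub_two u hn]
      simp only [Nat.reduceSubDiff, Nat.add_one_sub_one, clampedSecondDiff, add_tsub_cancel_left,
        tsub_zero]
      ring
    · show (A_CF (m + 4) *ᵥ u) ⟨m + 4 - 1, by omega⟩ = _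
      rw [A_CF_mulVec_apply_sub_one u (by omega)]
      simp only [Nat.reduceSubDiff, Nat.add_one_sub_one, clampedSecondDiff, tsub_self, tsub_zero]
      ring

/-- Any solution `u` of the nonlinear finite-difference system
`A u = h⁴ K exp(-u)` with the clamped-free beam matrix `A` is positive and
strictly increasing: `0 < u₁` and `uᵢ < uᵢ₊₁`. -/
theorem A_CF_solution_pos_strictMono (n : ℕ) (hn : 5 ≤ n) (K h : ℝ)
    (hK : 0 < K) (hh : 0 < h) (u : Fin n → ℝ)
    (hu : ∀ i : Fin n, (A_CF n).mulVec u i = h ^ 4 * K * Real.exp (-(u i))) :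
    0 < u ⟨0, by omega⟩ ∧ StrictMono u := by
  set W := clampedSecondDiff (extendByZero u)
  have hW_rev : ∀ k ≤ n - 1, 0 < clampedSecondDiff (fun k => W (n - 1 - k)) k := fun k hk => by
    have := hu ⟨n - 1 - k, by omega⟩
    rw [A_CF_mulVec_apply_eq_clampedSecondDiff (by omega), Fin.val_mk,
      Nat.sub_sub_self hk] at this
    rw [this]
    positivity
  have hW : ∀ k ≤ n - 1, 0 < W k := fun k hk => by
    simpa [Nat.sub_sub_self hk] using
      (pos_and_strictMonoOn_of_clampedSecondDiff_pos hW_rev).1 (n - 1 - k) (Nat.sub_le _ _)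
  obtain ⟨hpos, hmono⟩ := pos_and_strictMonoOn_of_clampedSecondDiff_pos hW
  refine ⟨?_, fun a b hab => ?_⟩
  · rw [← extendByZero_coe u]
    exact hpos 0 (Nat.zero_le _)
  · simpa only [extendByZero_coe] using
      hmono (Nat.le_sub_one_of_lt a.isLt) (Nat.le_sub_one_of_lt b.isLt) hab
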